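/- Suppose f : ℝ^d → ℝ is L_f-smooth and ρ_f-weakly convex, h : ℝ^d → ℝ is L_h-smooth, g : ℝ^d → ℝ ∪ {+∞} is proper, lower semicontinuous and ρ-weakly convex, and let γ ∈ (0, min{1/ρ, 1/ρ_f}) and λ > 0. Let sequences (z^k), (x^k), (y^k) in ℝ^d satisfy, for every k: x^k is the unique minimizer over u ∈ ℝ^d of f(u) + (1/(2γ))‖u − z^k‖²; y^k is the unique minimizer over y ∈ ℝ^d of g(y) + (1/(2γ))‖y − (2x^k − z^k − γ∇h(x^k))‖²; and z^{k+1} = z^k + λ(y^k − x^k). Then for every k: y^k equals the unique minimizer over y ∈ ℝ^d of g(y) + (1/(2γ))‖y − (x^k − γ∇(f+h)(x^k))‖², and x^{k+1} equals the unique minimizer over u ∈ ℝ^d of f(u) + (1/(2γ))‖u − ((1 − λ)x^k + γ∇f(x^k) + λy^k)‖². -/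

import Mathlib

/-!
Both identities are pure algebra once the `f`-prox step is read as an implicit gradient step:
the first-order condition at the minimizer `x k` gives `z k = x k + γ ∇f(x k)`. Substituting this
turns `2 x k - z k - γ ∇h(x k)` into `x k - γ ∇(f + h)(x k)`, and turns
`(1 - λ) x k + γ ∇f(x k) + λ y k` into `z k + λ (y k - x k) = z (k + 1)`.
-/

open scoped RealInnerProductSpace

/-- `g` is `ρ`-weakly convex: `g + (ρ/2)‖·‖²` is convex (extended-real-valued version). -/
def WeaklyConvexE {E : Type*} [NormedAddCommGroup E] [InnerProductSpace ℝ E]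
    (ρ : ℝ) (g : E → EReal) : Prop :=
  ∀ x y : E, ∀ t : ℝ, 0 ≤ t → t ≤ 1 →
    g (t • x + (1 - t) • y) + (((ρ / 2) * ‖t • x + (1 - t) • y‖ ^ 2 : ℝ) : EReal) ≤
      (t : EReal) * (g x + (((ρ / 2) * ‖x‖ ^ 2 : ℝ) : EReal)) +
        ((1 - t : ℝ) : EReal) * (g y + (((ρ / 2) * ‖y‖ ^ 2 : ℝ) : EReal))

open InnerProductSpace

section Gradient

variable {F : Type*} [NormedAddCommGroup F] [InnerProductSpace ℝ F] [CompleteSpace F]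

theorem gradient_fun_add {f g : F → ℝ} {x : F} (hf : DifferentiableAt ℝ f x)
    (hg : DifferentiableAt ℝ g x) :
    gradient (fun v => f v + g v) x = gradient f x + gradient g x :=
  (toDual ℝ F).injective <| by simp only [toDual_gradient, map_add, fderiv_fun_add hf hg]

theorem IsLocalMin.hasGradientAt_eq_zero {f : F → ℝ} {a f' : F} (h : IsLocalMin f a)
    (hf : HasGradientAt f f' a) : f' = 0 := by
  simpa using h.hasFDerivAt_eq_zero hf

theorem DifferentiableAt.hasGradientAt_add_prox_penalty {f : F → ℝ} {p : F}
    (hf : DifferentiableAt ℝ f p) (γ : ℝ) (z : F) :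
    HasGradientAt (fun u => f u + 1 / (2 * γ) * ‖u - z‖ ^ 2) (gradient f p + γ⁻¹ • (p - z)) p := by
  refine (hf.hasFDerivAt.add
    (((hasFDerivAt_id p).sub_const z).norm_sq.const_mul (1 / (2 * γ)))).congr_fderiv ?_
  ext v
  simp only [one_div, mul_inv_rev, id_eq, map_sub, ContinuousLinearMap.comp_id, add_apply,
    smul_apply, sub_apply, coe_innerSL_apply, nsmul_eq_mul, Nat.cast_ofNat, smul_eq_mul, map_add,
    toDual_gradient, map_smul, toDual_apply_apply, add_right_inj]
  ring

theorem prox_center_eq_add_smul_gradient {f : F → ℝ} {γ : ℝ} {z p : F}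
    (hf : DifferentiableAt ℝ f p) (hγ : γ ≠ 0)
    (hmin : ∀ u, f p + 1 / (2 * γ) * ‖p - z‖ ^ 2 ≤ f u + 1 / (2 * γ) * ‖u - z‖ ^ 2) :
    z = p + γ • gradient f p := by
  have hcrit : gradient f p + γ⁻¹ • (p - z) = 0 :=
    IsLocalMin.hasGradientAt_eq_zero (Filter.Eventually.of_forall hmin)
      (hf.hasGradientAt_add_prox_penalty γ z)
  have hscaled := congrArg (γ • ·) hcrit
  simp only [smul_add, smul_smul, mul_inv_cancel₀ hγ, one_smul, smul_zero] at hscaled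
  linear_combination (norm := module) -hscaled

end Gradient

theorem shadow_DY_equivalence_general
    {E : Type*} [NormedAddCommGroup E] [InnerProductSpace ℝ E] [FiniteDimensional ℝ E]
    (f h : E → ℝ) (g : E → EReal)
    (hfd : Differentiable ℝ f)
    (hhd : Differentiable ℝ h)
    (γ lam : ℝ) (hγ0 : 0 < γ)
    (z x y : ℕ → E)
    (hx : ∀ k, ∀ u : E,
      f (x k) + 1 / (2 * γ) * ‖x k - z k‖ ^ 2 ≤ f u + 1 / (2 * γ) * ‖u - z k‖ ^ 2)
    (hy : ∀ k, ∀ w : E,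
      g (y k) + ((1 / (2 * γ) *
        ‖y k - (2 • x k - z k - γ • gradient h (x k))‖ ^ 2 : ℝ) : EReal) ≤
      g w + ((1 / (2 * γ) *
        ‖w - (2 • x k - z k - γ • gradient h (x k))‖ ^ 2 : ℝ) : EReal))
    (hz : ∀ k, z (k + 1) = z k + lam • (y k - x k)) :
    ∀ k : ℕ,
      (∀ w : E,
        g (y k) + ((1 / (2 * γ) *
          ‖y k - (x k - γ • gradient (fun v => f v + h v) (x k))‖ ^ 2 : ℝ) : EReal) ≤
        g w + ((1 / (2 * γ) *
          ‖w - (x k - γ • gradient (fun v => f v + h v) (x k))‖ ^ 2 : ℝ) : EReal)) ∧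
      (∀ u : E,
        f (x (k + 1)) + 1 / (2 * γ) *
          ‖x (k + 1) - ((1 - lam) • x k + γ • gradient f (x k) + lam • y k)‖ ^ 2 ≤
        f u + 1 / (2 * γ) *
          ‖u - ((1 - lam) • x k + γ • gradient f (x k) + lam • y k)‖ ^ 2) := by
  have hzx : ∀ k, z k = x k + γ • gradient f (x k) := fun k =>
    prox_center_eq_add_smul_gradient (hfd _) hγ0.ne' (hx k)
  intro k
  have hy_center : x k - γ • gradient (fun v => f v + h v) (x k) =
      2 • x k - z k - γ • gradient h (x k) := by
    rw [gradient_fun_add (hfd _) (hhd _), hzx k]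
    module
  have hx_center : (1 - lam) • x k + γ • gradient f (x k) + lam • y k = z (k + 1) := by
    rw [hz k, hzx k]
    module
  exact ⟨by simpa only [hy_center] using hy k, by simpa only [hx_center] using hx (k + 1)⟩

theorem shadow_DY_equivalence
    {E : Type*} [NormedAddCommGroup E] [InnerProductSpace ℝ E] [FiniteDimensional ℝ E]
    (f h : E → ℝ) (g : E → EReal) (Lf Lh ρ ρf : ℝ)
    (hLf : 0 ≤ Lf) (hLh : 0 ≤ Lh) (hρ : 0 ≤ ρ) (hρf : 0 ≤ ρf)
    (hfd : Differentiable ℝ f)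
    (hflip : ∀ x y : E, ‖gradient f x - gradient f y‖ ≤ Lf * ‖x - y‖)
    (hfwc : ConvexOn ℝ Set.univ (fun x : E => f x + (ρf / 2) * ‖x‖ ^ 2))
    (hhd : Differentiable ℝ h)
    (hhlip : ∀ x y : E, ‖gradient h x - gradient h y‖ ≤ Lh * ‖x - y‖)
    (hgtop : ∃ x, g x ≠ ⊤) (hgbot : ∀ x, g x ≠ ⊥)
    (hglsc : LowerSemicontinuous g)
    (hwc : WeaklyConvexE ρ g)
    (γ lam : ℝ) (hγ0 : 0 < γ) (hγρ : γ * ρ < 1) (hγρf : γ * ρf < 1) (hlam : 0 < lam)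
    (z x y : ℕ → E)
    (hx : ∀ k, ∀ u : E,
      f (x k) + 1 / (2 * γ) * ‖x k - z k‖ ^ 2 ≤ f u + 1 / (2 * γ) * ‖u - z k‖ ^ 2)
    (hy : ∀ k, ∀ w : E,
      g (y k) + ((1 / (2 * γ) *
        ‖y k - (2 • x k - z k - γ • gradient h (x k))‖ ^ 2 : ℝ) : EReal) ≤
      g w + ((1 / (2 * γ) *
        ‖w - (2 • x k - z k - γ • gradient h (x k))‖ ^ 2 : ℝ) : EReal))
    (hz : ∀ k, z (k + 1) = z k + lam • (y k - x k)) :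
    ∀ k : ℕ,
      (∀ w : E,
        g (y k) + ((1 / (2 * γ) *
          ‖y k - (x k - γ • gradient (fun v => f v + h v) (x k))‖ ^ 2 : ℝ) : EReal) ≤
        g w + ((1 / (2 * γ) *
          ‖w - (x k - γ • gradient (fun v => f v + h v) (x k))‖ ^ 2 : ℝ) : EReal)) ∧
      (∀ u : E,
        f (x (k + 1)) + 1 / (2 * γ) *
          ‖x (k + 1) - ((1 - lam) • x k + γ • gradient f (x k) + lam • y k)‖ ^ 2 ≤
        f u + 1 / (2 * γ) *
          ‖u - ((1 - lam) • x k + γ • gradient f (x k) + lam • y k)‖ ^ 2) :=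
  shadow_DY_equivalence_general f h g hfd hhd γ lam hγ0 z x y hx hy hz
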